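/- Let $u$ be a continuous solution of EVI$_\lambda$ with $\lambda\le0$ and $u_0\in\mathrm{Dom}(|\partial\phi|)$. Then for every $v\in\mathrm{Dom}\phi$ and $t\ge0$: $\frac{e^{2\lambda t}}2 d(u_t,v)^2-\frac12 d(u_0,v)^2\le \mathsf E_{2\lambda}(t)(\phi(v)-\phi(u_0))+\frac{t^2}2|\partial\phi|^2(u_0)$. -/

import Mathlib

open Filter in
/-- The metric slope `|∂φ|(x)` of an extended-real functional. -/
noncomputable def metricSlope {X : Type*} [MetricSpace X] (φ : X → EReal) (x : X) : EReal :=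
  if φ x = ⊤ then ⊤ else
    max 0 (Filter.limsup (fun y => (max (φ x - φ y) 0) / ((dist x y : ℝ) : EReal))
      (nhdsWithin x {x}ᶜ))

/-- The global `λ`-slope `|∂^λ φ|(x)`. -/
noncomputable def globalSlope {X : Type*} [MetricSpace X] (φ : X → EReal) (lam : ℝ) (x : X) :
    EReal :=
  if φ x = ⊤ then ⊤ else
    max 0 (⨆ y ∈ {y : X | y ≠ x},
      (max (φ x - φ y + ((lam / 2 * dist x y ^ 2 : ℝ) : EReal)) 0) / ((dist x y : ℝ) : EReal))

/-- Upper right Dini derivative, with values in `EReal`. -/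
noncomputable def upperDiniDeriv (f : ℝ → ℝ) (t : ℝ) : EReal :=
  Filter.limsup (fun h => (((f (t + h) - f t) / h : ℝ) : EReal)) (nhdsWithin 0 (Set.Ioi 0))

/-- `E_λ(t) = ∫₀ᵗ e^{λ r} dr`. -/
noncomputable def Elam (lam t : ℝ) : ℝ :=
  if lam = 0 then t else (Real.exp (lam * t) - 1) / lam

/-- The pointwise `EVI_λ` differential inequality at time `t`. -/
noncomputable def EVIineq {X : Type*} [MetricSpace X]
    (φ : X → EReal) (lam : ℝ) (u : ℝ → X) (t : ℝ) : Prop :=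
  ∀ v : X, φ v ≠ ⊤ →
    ((1 / 2 : ℝ) : EReal) * upperDiniDeriv (fun s => dist (u s) v ^ 2) t +
      ((lam / 2 * dist (u t) v ^ 2 : ℝ) : EReal) ≤ φ v - φ (u t)

/-- A solution of `EVI_λ` on `(0, ∞)`: a continuous curve with values in `Dom φ`
satisfying the `EVI_λ` differential inequality. -/
noncomputable def IsEVISolution {X : Type*} [MetricSpace X]
    (φ : X → EReal) (lam : ℝ) (u : ℝ → X) : Prop :=
  ContinuousOn u (Set.Ioi 0) ∧ (∀ t ∈ Set.Ioi (0:ℝ), φ (u t) ≠ ⊤) ∧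
  ∀ t ∈ Set.Ioi (0:ℝ), EVIineq φ lam u t

open Filter Set Real Topology

/-!
Everything is extracted from the EVI through its integrated form: if `H' ≥ e^{νt} (φ v - φ (u t))`
with `ν ≤ λ`, then `e^{νt} d²(u t, v) - 2 H t` is nonincreasing. Tested against `v = u 0`, together
with the local slope bound `φ (u 0) - φ (u t) ≤ L d(u t, u 0)` for `L > |∂φ|(u 0)`, it gives the
self-improving estimate `d(u t, u 0) ≤ K t ⟹ d(u t, u 0) ≤ √(L e^{-λ r} K) t`, hence
`d(u t, u 0) ≤ L t` for small `t`. Tested against an arbitrary `y` and differentiated at `t = 0`,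
it then yields `φ (u 0) - φ y ≤ |∂φ|(u 0) d(u 0, y) - λ/2 d²(u 0, y)`. A comparison argument turns
this into `d(u t, u 0) ≤ |∂φ|(u 0) E_{-λ}(t)`, whence `φ (u 0) - φ (u t) ≤ |∂φ|²(u 0) t e^{-2λt}`,
and the integrated EVI with `ν = 2λ` and this lower bound on `φ (u t)` is the claim.
-/

lemma Elam_zero (c : ℝ) : Elam c 0 = 0 := by
  unfold Elam; split <;> simp

lemma mul_Elam (c t : ℝ) : c * Elam c t = exp (c * t) - 1 := by
  unfold Elam; split
  · simp [*]
  · field_simp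

lemma hasDerivAt_Elam (c t : ℝ) : HasDerivAt (Elam c) (exp (c * t)) t := by
  unfold Elam
  split
  · subst c; simpa using hasDerivAt_id' t
  · have h := ((((hasDerivAt_id' t).const_mul c).exp).sub_const 1).div_const c
    exact h.congr_deriv (by field_simp)

lemma Elam_nonneg (c : ℝ) {t : ℝ} (ht : 0 ≤ t) : 0 ≤ Elam c t := by
  have hmono : Monotone (Elam c) := monotone_of_deriv_nonneg
    (fun t => (hasDerivAt_Elam c t).differentiableAt)
    (fun t => (hasDerivAt_Elam c t).deriv ▸ (exp_pos _).le)
  simpa [Elam_zero] using hmono ht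

lemma Elam_add_mul_sq (c t : ℝ) : Elam c t + c / 2 * Elam c t ^ 2 = Elam (2 * c) t := by
  rcases eq_or_ne c 0 with rfl | hc
  · simp [Elam]
  · have h2c : 2 * c ≠ 0 := mul_ne_zero two_ne_zero hc
    have hexp : exp (2 * c * t) = exp (c * t) ^ 2 := by rw [← exp_nat_mul]; ring_nf
    simp only [Elam, if_neg hc, if_neg h2c, hexp]
    field_simp
    ring

-- `eˣ - 1 ≤ x eˣ` is `1 - x ≤ e⁻ˣ`
lemma Elam_le_mul_exp {c : ℝ} (hc : 0 ≤ c) (t : ℝ) : Elam c t ≤ t * exp (c * t) := by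
  rcases hc.eq_or_lt with rfl | hc
  · simp [Elam]
  · have h := add_one_le_exp (-(c * t))
    have hprod : exp (-(c * t)) * exp (c * t) = 1 := by rw [← exp_add]; simp
    rw [Elam, if_neg hc.ne', div_le_iff₀ hc]
    nlinarith [exp_pos (c * t)]

lemma HasDerivAt.nonneg_of_eventually_le_right {f : ℝ → ℝ} {f' a : ℝ} (hf : HasDerivAt f f' a)
    (h : ∀ᶠ x in 𝓝[>] a, f a ≤ f x) : 0 ≤ f' := by
  have hslope : Tendsto (slope f a) (𝓝[>] a) (𝓝 f') :=
    (hasDerivAt_iff_tendsto_slope.1 hf).mono_left (nhdsWithin_mono a fun x (hx : a < x) => hx.ne')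
  refine ge_of_tendsto hslope ?_
  filter_upwards [h, self_mem_nhdsWithin] with x hx hax
  rw [slope_def_field]
  exact div_nonneg (sub_nonneg.2 hx) (sub_nonneg.2 (le_of_lt hax))

section MetricSlope

variable {X : Type*} [MetricSpace X] {φ : X → EReal} {x : X}

lemma metricSlope_nonneg : 0 ≤ metricSlope φ x := by
  unfold metricSlope
  split
  · exact le_top
  · exact le_max_left _ _

lemma ne_top_of_metricSlope_ne_top (hx : metricSlope φ x ≠ ⊤) : φ x ≠ ⊤ :=
  fun h => hx (by rw [metricSlope, if_pos h])

lemma coe_toReal_metricSlope (hx : metricSlope φ x ≠ ⊤) :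
    ((metricSlope φ x).toReal : EReal) = metricSlope φ x :=
  EReal.coe_toReal hx (EReal.bot_lt_zero.trans_le metricSlope_nonneg).ne'

lemma eventually_sub_le_mul_dist_of_metricSlope_lt (hbot : ∀ y, φ y ≠ ⊥)
    (hx : metricSlope φ x ≠ ⊤) {L : ℝ} (hL : (metricSlope φ x).toReal < L) :
    ∀ᶠ y in 𝓝 x, φ y ≠ ⊤ → (φ x).toReal - (φ y).toReal ≤ L * dist x y := by
  have hφx := ne_top_of_metricSlope_ne_top hx
  have hlimsup : limsup (fun y => max (φ x - φ y) 0 / ((dist x y : ℝ) : EReal)) (𝓝[≠] x)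
      < (L : EReal) := by
    refine lt_of_le_of_lt ?_ ((EReal.coe_lt_coe_iff.2 hL).trans_eq' (coe_toReal_metricSlope hx))
    rw [metricSlope, if_neg hφx]
    exact le_max_right _ _
  filter_upwards [eventually_nhdsWithin_iff.1 (eventually_lt_of_limsup_lt hlimsup)]
    with y hy hφy
  rcases eq_or_ne y x with rfl | hyx
  · simp
  have hd : 0 < dist x y := dist_pos.2 hyx.symm
  have hq := hy hyx
  rw [← EReal.coe_toReal hφx (hbot x), ← EReal.coe_toReal hφy (hbot y), ← EReal.coe_sub,
    ← EReal.coe_zero, ← EReal.coe_strictMono.monotone.map_max, ← EReal.coe_div,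
    EReal.coe_lt_coe_iff, div_lt_iff₀ hd] at hq
  exact (le_max_left _ _).trans hq.le

end MetricSlope

section EVI

variable {X : Type*} [MetricSpace X] {φ : X → EReal} {lam : ℝ} {u : ℝ → X}

lemma IsEVISolution.frequently_slope_dist_sq_lt (hEVI : IsEVISolution φ lam u)
    (hbot : ∀ y, φ y ≠ ⊥) {v : X} (hv : φ v ≠ ⊤) {x : ℝ} (hx : 0 < x) {r : ℝ}
    (hr : 2 * ((φ v).toReal - (φ (u x)).toReal) - lam * dist (u x) v ^ 2 < r) :
    ∃ᶠ z in 𝓝[>] x, slope (fun s => dist (u s) v ^ 2) x z < r := by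
  have hevi := hEVI.2.2 x hx v hv
  rw [← EReal.coe_toReal hv (hbot v), ← EReal.coe_toReal (hEVI.2.1 x hx) (hbot _),
    ← EReal.coe_sub] at hevi
  have hdini : upperDiniDeriv (fun s => dist (u s) v ^ 2) x < r := by
    generalize upperDiniDeriv (fun s => dist (u s) v ^ 2) x = D at hevi ⊢
    induction D using EReal.rec with
    | bot => exact EReal.bot_lt_coe r
    | top =>
      rw [EReal.coe_mul_top_of_pos (by norm_num), EReal.top_add_coe] at hevi
      exact absurd hevi (EReal.coe_lt_top _).not_ge
    | coe w =>
      norm_cast at hevi ⊢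
      linarith
  have hquot := eventually_lt_of_limsup_lt hdini
  rw [show 𝓝[>] x = map (x + ·) (𝓝[>] 0) by simp, frequently_map]
  refine (hquot.mono fun h hh => ?_).frequently
  rw [slope_def_field, add_sub_cancel_left]
  exact_mod_cast hh

lemma IsEVISolution.dist_sq_le_of_comparison (hEVI : IsEVISolution φ lam u)
    (hbot : ∀ y, φ y ≠ ⊥) {v : X} (hv : φ v ≠ ⊤) {α b : ℝ} (hα : 0 < α) (hαb : α ≤ b)
    {B B' : ℝ → ℝ} (hB : ∀ t, HasDerivAt B (B' t) t) (hαB : dist (u α) v ^ 2 ≤ B α)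
    (hB' : ∀ x ∈ Ico α b, dist (u x) v ^ 2 = B x →
      2 * ((φ v).toReal - (φ (u x)).toReal) - lam * B x < B' x) :
    dist (u b) v ^ 2 ≤ B b := by
  have hg : ContinuousOn (fun t => dist (u t) v ^ 2) (Icc α b) :=
    ((continuous_id.dist continuous_const).comp_continuousOn
      (hEVI.1.mono fun t ht => hα.trans_le ht.1)).pow 2
  exact image_le_of_liminf_slope_right_lt_deriv_boundary hg
    (fun x hx r hr => hEVI.frequently_slope_dist_sq_lt hbot hv (hα.trans_le hx.1) hr)
    hαB hB (fun x hx hxB => by rw [hxB]; exact hB' x hx hxB) (right_mem_Icc.2 hαb)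

lemma IsEVISolution.exp_mul_dist_sq_le_of_pos (hEVI : IsEVISolution φ lam u)
    (hbot : ∀ y, φ y ≠ ⊥) {ν : ℝ} (hν : ν ≤ lam) {v : X} (hv : φ v ≠ ⊤) {a b : ℝ} (ha : 0 < a)
    (hab : a ≤ b) {H H' : ℝ → ℝ} (hH : ∀ t, HasDerivAt H (H' t) t)
    (hH' : ∀ t ∈ Ico a b, exp (ν * t) * ((φ v).toReal - (φ (u t)).toReal) ≤ H' t) :
    exp (ν * b) * dist (u b) v ^ 2 ≤ exp (ν * a) * dist (u a) v ^ 2 + 2 * (H b - H a) := by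
  set g : ℝ → ℝ := fun t => dist (u t) v ^ 2
  set C := exp (ν * a) * g a
  have hslack : ∀ ε > 0, exp (ν * b) * g b ≤ C + 2 * (H b - H a) + ε * (b - a + 1) := by
    intro ε hε
    set B : ℝ → ℝ := fun t => exp (-(ν * t)) * (C + 2 * (H t - H a) + ε * (t - a + 1))
    have hB : ∀ t, HasDerivAt B (exp (-(ν * t)) * (2 * H' t + ε) - ν * B t) t := by
      intro t
      have hexp : HasDerivAt (fun t => exp (-(ν * t))) (exp (-(ν * t)) * -(ν * 1)) t :=
        ((hasDerivAt_id' t).const_mul ν).neg.exp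
      have hin : HasDerivAt (fun t => C + 2 * (H t - H a) + ε * (t - a + 1)) (2 * H' t + ε * 1) t :=
        ((((hH t).sub_const (H a)).const_mul 2).const_add C).add
          ((((hasDerivAt_id' t).sub_const a).add_const 1).const_mul ε)
      exact (hexp.mul hin).congr_deriv (by simp only [B]; ring)
    have hgB : g b ≤ B b := by
      refine hEVI.dist_sq_le_of_comparison hbot hv ha hab hB ?_ fun x hx hgx => ?_
      · have h : g a ≤ exp (-(ν * a)) * C := by
          rw [exp_neg, inv_mul_cancel_left₀ (exp_pos _).ne']
        have hε' : 0 ≤ exp (-(ν * a)) * ε := (mul_pos (exp_pos _) hε).le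
        simp only [B, sub_self, mul_zero, add_zero, zero_add, mul_one, mul_add]
        linarith
      · have hφ : (φ v).toReal - (φ (u x)).toReal ≤ exp (-(ν * x)) * H' x := by
          rw [exp_neg, le_inv_mul_iff₀ (exp_pos _)]
          exact hH' x hx
        have hBx : 0 ≤ B x := hgx ▸ sq_nonneg _
        nlinarith [mul_pos (exp_pos (-(ν * x))) hε, mul_le_mul_of_nonneg_right hν hBx]
    have hBb : exp (ν * b) * B b = C + 2 * (H b - H a) + ε * (b - a + 1) := by
      simp only [B]
      rw [exp_neg, mul_inv_cancel_left₀ (exp_pos _).ne']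
    exact hBb ▸ mul_le_mul_of_nonneg_left hgB (exp_pos (ν * b)).le
  refine le_of_forall_pos_le_add fun ε hε => ?_
  have hba : 0 < b - a + 1 := by linarith
  simpa [div_mul_cancel₀ _ hba.ne'] using hslack (ε / (b - a + 1)) (div_pos hε hba)

lemma IsEVISolution.exp_mul_dist_sq_le (hEVI : IsEVISolution φ lam u)
    (hbot : ∀ y, φ y ≠ ⊥) (hcont : ContinuousOn u (Ici 0)) {ν : ℝ} (hν : ν ≤ lam)
    {v : X} (hv : φ v ≠ ⊤) {a b : ℝ} (ha : 0 ≤ a) (hab : a ≤ b) {H H' : ℝ → ℝ}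
    (hH : ∀ t, HasDerivAt H (H' t) t)
    (hH' : ∀ t ∈ Ioo a b, exp (ν * t) * ((φ v).toReal - (φ (u t)).toReal) ≤ H' t) :
    exp (ν * b) * dist (u b) v ^ 2 ≤ exp (ν * a) * dist (u a) v ^ 2 + 2 * (H b - H a) := by
  rcases hab.eq_or_lt with rfl | hab
  · simp
  have hcont_a : ContinuousWithinAt
      (fun α => exp (ν * α) * dist (u α) v ^ 2 + 2 * (H b - H α)) (Ici 0) a :=
    ((continuous_exp.comp (continuous_const_mul ν)).continuousWithinAt.mul
      (((hcont a ha).dist continuousWithinAt_const).pow 2)).add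
      ((continuousWithinAt_const.sub (hH a).continuousAt.continuousWithinAt).const_mul 2)
  refine ge_of_tendsto (hcont_a.mono (Ioi_subset_Ici ha)).tendsto ?_
  filter_upwards [Ioo_mem_nhdsGT hab] with α hα
  exact hEVI.exp_mul_dist_sq_le_of_pos hbot hν hv (ha.trans_lt hα.1) hα.2.le hH
    fun t ht => hH' t ⟨hα.1.trans_le ht.1, ht.2⟩

lemma IsEVISolution.dist_sq_le_of_energy_drop (hEVI : IsEVISolution φ lam u)
    (hbot : ∀ y, φ y ≠ ⊥) (hcont : ContinuousOn u (Ici 0)) (hlam : lam ≤ 0)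
    (hφ0 : φ (u 0) ≠ ⊤) {τ : ℝ} (hτ : 0 ≤ τ) {H H' : ℝ → ℝ}
    (hH : ∀ t, HasDerivAt H (H' t) t) (hH0 : H 0 = 0) (hH'0 : ∀ t ∈ Ioo 0 τ, 0 ≤ H' t)
    (hdrop : ∀ t ∈ Ioo 0 τ, (φ (u 0)).toReal - (φ (u t)).toReal ≤ H' t) :
    dist (u τ) (u 0) ^ 2 ≤ exp (-lam * τ) * (2 * H τ) := by
  have h := hEVI.exp_mul_dist_sq_le hbot hcont le_rfl hφ0 le_rfl hτ hH fun t ht => by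
    have he : exp (lam * t) ≤ 1 := exp_le_one_iff.2 (mul_nonpos_of_nonpos_of_nonneg hlam ht.1.le)
    nlinarith [exp_pos (lam * t), hdrop t ht, hH'0 t ht]
  rw [neg_mul, exp_neg, le_inv_mul_iff₀ (exp_pos _)]
  simpa [hH0] using h

lemma IsEVISolution.dist_le_two_mul_of_energy_bound (hEVI : IsEVISolution φ lam u)
    (hbot : ∀ y, φ y ≠ ⊥) (hcont : ContinuousOn u (Ici 0)) (hlam : lam ≤ 0)
    (hφ0 : φ (u 0) ≠ ⊤) {L r : ℝ} (hL : 0 ≤ L)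
    (henergy : ∀ t ∈ Ioo 0 r, (φ (u 0)).toReal - (φ (u t)).toReal ≤ L * dist (u t) (u 0)) :
    ∀ t ∈ Icc 0 r, dist (u t) (u 0) ≤ 2 * (L * exp (-lam * r)) * t := by
  intro τ hτ
  set D : ℝ → ℝ := fun t => dist (u t) (u 0)
  have hDcont : ContinuousOn D (Icc 0 τ) :=
    (continuous_id.dist continuous_const).comp_continuousOn (hcont.mono fun t ht => ht.1)
  obtain ⟨σ, hσ, hσmax⟩ := isCompact_Icc.exists_isMaxOn (nonempty_Icc.2 hτ.1) hDcont
  set ω := D σ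
  have hω : 0 ≤ ω := dist_nonneg
  have hσsq : ω ^ 2 ≤ 2 * (L * exp (-lam * r)) * τ * ω := by
    have h := hEVI.dist_sq_le_of_energy_drop hbot hcont hlam hφ0 hσ.1
      (H := fun t => L * ω * t) (fun t => by simpa using (hasDerivAt_id' t).const_mul (L * ω))
      (by simp) (fun _ _ => mul_nonneg hL hω) fun t ht =>
        (henergy t ⟨ht.1, ht.2.trans_le (hσ.2.trans hτ.2)⟩).trans
          (mul_le_mul_of_nonneg_left (hσmax ⟨ht.1.le, ht.2.le.trans hσ.2⟩) hL)
    have hexp : exp (-lam * σ) ≤ exp (-lam * r) :=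
      exp_le_exp.2 (mul_le_mul_of_nonneg_left (hσ.2.trans hτ.2) (neg_nonneg.2 hlam))
    calc ω ^ 2 ≤ exp (-lam * σ) * (2 * (L * ω * σ)) := h
      _ ≤ exp (-lam * r) * (2 * (L * ω * τ)) :=
        mul_le_mul hexp (by gcongr; exact hσ.2) (by have := hσ.1; positivity) (exp_pos _).le
      _ = 2 * (L * exp (-lam * r)) * τ * ω := by ring
  have hωτ : ω ≤ 2 * (L * exp (-lam * r)) * τ := by
    rcases hω.eq_or_lt with h0 | h0
    · exact h0 ▸ mul_nonneg (mul_nonneg two_pos.le (mul_nonneg hL (exp_pos _).le)) hτ.1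
    · nlinarith
  exact (hσmax ⟨hτ.1, le_rfl⟩).trans hωτ

lemma IsEVISolution.dist_sq_le_of_dist_le (hEVI : IsEVISolution φ lam u)
    (hbot : ∀ y, φ y ≠ ⊥) (hcont : ContinuousOn u (Ici 0)) (hlam : lam ≤ 0)
    (hφ0 : φ (u 0) ≠ ⊤) {L r K : ℝ} (hL : 0 ≤ L) (hK : 0 ≤ K)
    (henergy : ∀ t ∈ Ioo 0 r, (φ (u 0)).toReal - (φ (u t)).toReal ≤ L * dist (u t) (u 0))
    (hlin : ∀ t ∈ Icc 0 r, dist (u t) (u 0) ≤ K * t) :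
    ∀ t ∈ Icc 0 r, dist (u t) (u 0) ^ 2 ≤ L * exp (-lam * r) * K * t ^ 2 := by
  intro τ hτ
  have h := hEVI.dist_sq_le_of_energy_drop hbot hcont hlam hφ0 hτ.1
    (H := fun t => L * K * t ^ 2 / 2) (H' := fun t => L * K * t)
    (fun t => ((hasDerivAt_pow 2 t).const_mul (L * K / 2)).congr_deriv (by ring)
      |>.congr_of_eventuallyEq (Eventually.of_forall fun s => by ring))
    (by simp) (fun t ht => mul_nonneg (mul_nonneg hL hK) ht.1.le) fun t ht =>
      (henergy t ⟨ht.1, ht.2.trans_le hτ.2⟩).trans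
        (by nlinarith [hlin t ⟨ht.1.le, ht.2.le.trans hτ.2⟩])
  have hexp : exp (-lam * τ) ≤ exp (-lam * r) :=
    exp_le_exp.2 (mul_le_mul_of_nonneg_left hτ.2 (neg_nonneg.2 hlam))
  calc dist (u τ) (u 0) ^ 2 ≤ exp (-lam * τ) * (2 * (L * K * τ ^ 2 / 2)) := h
    _ ≤ exp (-lam * r) * (2 * (L * K * τ ^ 2 / 2)) := by gcongr
    _ = L * exp (-lam * r) * K * τ ^ 2 := by ring

lemma IsEVISolution.dist_le_of_energy_bound (hEVI : IsEVISolution φ lam u)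
    (hbot : ∀ y, φ y ≠ ⊥) (hcont : ContinuousOn u (Ici 0)) (hlam : lam ≤ 0)
    (hφ0 : φ (u 0) ≠ ⊤) {L r : ℝ} (hL : 0 ≤ L)
    (henergy : ∀ t ∈ Ioo 0 r, (φ (u 0)).toReal - (φ (u t)).toReal ≤ L * dist (u t) (u 0)) :
    ∀ t ∈ Icc 0 r, dist (u t) (u 0) ≤ L * exp (-lam * r) * t := by
  set M := L * exp (-lam * r)
  have hM : 0 ≤ M := mul_nonneg hL (exp_pos _).le
  set D : ℝ → ℝ := fun t => dist (u t) (u 0)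
  have hcrude := hEVI.dist_le_two_mul_of_energy_bound hbot hcont hlam hφ0 hL henergy
  -- the best linear rate `K` of `D` on `[0, r]` satisfies `K ≤ √(M K)`
  set K := ⨆ t : Ioc 0 r, D t / t
  have hbdd : BddAbove (range fun t : Ioc 0 r => D t / t) :=
    ⟨2 * M, by
      rintro _ ⟨t, rfl⟩
      exact (div_le_iff₀ t.2.1).2 (hcrude t ⟨t.2.1.le, t.2.2⟩)⟩
  have hK : 0 ≤ K := Real.iSup_nonneg fun t => div_nonneg dist_nonneg t.2.1.le
  have hlin : ∀ t ∈ Icc 0 r, D t ≤ K * t := by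
    intro t ht
    rcases ht.1.eq_or_lt with rfl | ht0
    · simp [D]
    · exact (div_le_iff₀ ht0).1 (le_ciSup hbdd ⟨t, ht0, ht.2⟩)
  have hsq := hEVI.dist_sq_le_of_dist_le hbot hcont hlam hφ0 hL hK henergy hlin
  have hKM : K ≤ M := by
    have h : K ≤ √(M * K) := Real.iSup_le (fun t => by
      rw [Real.le_sqrt (div_nonneg dist_nonneg t.2.1.le) (mul_nonneg hM hK), div_pow,
        div_le_iff₀ (pow_pos t.2.1 2)]
      exact hsq t ⟨t.2.1.le, t.2.2⟩) (Real.sqrt_nonneg _)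
    rw [Real.le_sqrt hK (mul_nonneg hM hK)] at h
    nlinarith
  exact fun t ht => (hlin t ht).trans (mul_le_mul_of_nonneg_right hKM ht.1)

lemma IsEVISolution.exists_dist_le_and_energy_le (hEVI : IsEVISolution φ lam u)
    (hbot : ∀ y, φ y ≠ ⊥) (hcont : ContinuousOn u (Ici 0)) (hlam : lam ≤ 0)
    (hu0 : metricSlope φ (u 0) ≠ ⊤) {L : ℝ} (hL : (metricSlope φ (u 0)).toReal < L) :
    ∃ r > 0, ∀ t ∈ Icc 0 r, dist (u t) (u 0) ≤ L * t ∧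
      (φ (u 0)).toReal - (φ (u t)).toReal ≤ L * dist (u t) (u 0) := by
  have hφ0 := ne_top_of_metricSlope_ne_top hu0
  obtain ⟨L', hSL', hL'L⟩ := exists_between hL
  have hL' : 0 ≤ L' := (EReal.toReal_nonneg metricSlope_nonneg).trans hSL'.le
  have hu : Tendsto u (𝓝[≥] 0) (𝓝 (u 0)) := hcont 0 (mem_Ici.2 le_rfl)
  have henergy : ∀ᶠ t in 𝓝[≥] 0, (φ (u 0)).toReal - (φ (u t)).toReal ≤ L' * dist (u t) (u 0) := by
    filter_upwards [hu.eventually (eventually_sub_le_mul_dist_of_metricSlope_lt hbot hu0 hSL'),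
      self_mem_nhdsWithin] with t ht ht0
    rw [dist_comm]
    rcases (show (0 : ℝ) ≤ t from ht0).eq_or_lt with rfl | htpos
    · exact ht hφ0
    · exact ht (hEVI.2.1 t htpos)
  have hrate : ∀ᶠ t in 𝓝[≥] 0, L' * exp (-lam * t) < L := by
    refine Tendsto.eventually_lt_const (v := L') hL'L (tendsto_nhdsWithin_of_tendsto_nhds ?_)
    simpa using ((continuous_const_mul (-lam)).rexp.const_mul L').tendsto 0
  obtain ⟨r, hr, hsub⟩ := mem_nhdsGE_iff_exists_Icc_subset.1 (henergy.and hrate)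
  have hspeed := hEVI.dist_le_of_energy_bound hbot hcont hlam hφ0 hL'
    fun t ht => (hsub (Ioo_subset_Icc_self ht)).1
  refine ⟨r, hr, fun t ht => ⟨(hspeed t ht).trans ?_, (hsub ht).1.trans ?_⟩⟩
  · exact mul_le_mul_of_nonneg_right (hsub (right_mem_Icc.2 hr.le)).2.le ht.1
  · exact mul_le_mul_of_nonneg_right hL'L.le dist_nonneg

lemma IsEVISolution.exp_mul_dist_sq_le_of_energy_le (hEVI : IsEVISolution φ lam u)
    (hbot : ∀ y, φ y ≠ ⊥) (hcont : ContinuousOn u (Ici 0)) (hlam : lam ≤ 0)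
    {y : X} (hy : φ y ≠ ⊤) {K τ : ℝ} (hK : 0 ≤ K) (hτ : 0 ≤ τ)
    (hdrop : ∀ t ∈ Ioo 0 τ, (φ (u 0)).toReal - (φ (u t)).toReal ≤ K * t) :
    exp (lam * τ) * dist (u τ) y ^ 2 ≤ dist (u 0) y ^ 2 +
      2 * (((φ y).toReal - (φ (u 0)).toReal) * Elam lam τ + K * τ ^ 2 / 2) := by
  set c₀ := (φ y).toReal - (φ (u 0)).toReal
  have h := hEVI.exp_mul_dist_sq_le hbot hcont le_rfl hy le_rfl hτ
    (H := fun t => c₀ * Elam lam t + K * t ^ 2 / 2) (H' := fun t => c₀ * exp (lam * t) + K * t)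
    (fun t => (((hasDerivAt_Elam lam t).const_mul c₀).add
      (((hasDerivAt_pow 2 t).const_mul K).div_const 2)).congr_deriv (by ring))
    fun t ht => by
      have he : exp (lam * t) ≤ 1 := exp_le_one_iff.2 (mul_nonpos_of_nonpos_of_nonneg hlam ht.1.le)
      have hyt : (φ y).toReal - (φ (u t)).toReal ≤ c₀ + K * t := by linarith [hdrop t ht]
      nlinarith [exp_pos (lam * t), mul_le_mul_of_nonneg_left hyt (exp_pos (lam * t)).le,
        mul_nonneg hK ht.1.le]
  simpa [Elam_zero] using h

lemma IsEVISolution.sub_le_mul_dist_sub_of_lt (hEVI : IsEVISolution φ lam u)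
    (hbot : ∀ y, φ y ≠ ⊥) (hcont : ContinuousOn u (Ici 0)) (hlam : lam ≤ 0)
    (hu0 : metricSlope φ (u 0) ≠ ⊤) {L : ℝ} (hL : (metricSlope φ (u 0)).toReal < L)
    {y : X} (hy : φ y ≠ ⊤) :
    (φ (u 0)).toReal - (φ y).toReal ≤ L * dist (u 0) y - lam / 2 * dist (u 0) y ^ 2 := by
  obtain ⟨r, hr, hloc⟩ := hEVI.exists_dist_le_and_energy_le hbot hcont hlam hu0 hL
  have hL0 : 0 ≤ L := (EReal.toReal_nonneg metricSlope_nonneg).trans hL.le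
  set d₀ := dist (u 0) y with hd₀
  set c₀ := (φ y).toReal - (φ (u 0)).toReal with hc₀
  -- `Φ ≥ 0` on `(0, r]` by the integrated EVI against `y` and `d(u τ, y) ≥ d₀ - L τ`;
  -- as `Φ 0 = 0`, this forces `Φ' 0 ≥ 0`
  set Φ : ℝ → ℝ := fun τ =>
    d₀ ^ 2 + 2 * (c₀ * Elam lam τ + L ^ 2 * τ ^ 2 / 2) - exp (lam * τ) * (d₀ ^ 2 - 2 * d₀ * L * τ)
  have hΦ : HasDerivAt Φ (2 * c₀ + 2 * L * d₀ - lam * d₀ ^ 2) 0 :=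
    (((((hasDerivAt_Elam lam 0).const_mul c₀).add
      (((hasDerivAt_pow 2 0).const_mul (L ^ 2)).div_const 2)).const_mul 2).const_add (d₀ ^ 2)).sub
      (((hasDerivAt_id' 0).const_mul lam).exp.mul
        (((hasDerivAt_id' 0).const_mul (2 * d₀ * L)).const_sub (d₀ ^ 2)))
      |>.congr_deriv (by simp only [mul_zero, exp_zero]; ring)
  have hΦpos : ∀ τ ∈ Ioc 0 r, Φ 0 ≤ Φ τ := by
    intro τ hτ
    have hEVIτ := hEVI.exp_mul_dist_sq_le_of_energy_le hbot hcont hlam hy (sq_nonneg L) hτ.1.le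
      fun t ht => by
        obtain ⟨hdist, henergy⟩ := hloc t ⟨ht.1.le, ht.2.le.trans hτ.2⟩
        nlinarith
    have htri : d₀ - L * τ ≤ dist (u τ) y := by
      linarith [dist_triangle (u 0) (u τ) y, dist_comm (u 0) (u τ), (hloc τ ⟨hτ.1.le, hτ.2⟩).1]
    have hlower : d₀ ^ 2 - 2 * d₀ * L * τ ≤ dist (u τ) y ^ 2 := by
      nlinarith [sq_nonneg (dist (u τ) y - d₀), dist_nonneg (x := u 0) (y := y)]
    have hΦ0 : Φ 0 = 0 := by simp [Φ, Elam_zero]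
    rw [← hd₀, ← hc₀] at hEVIτ
    simp only [hΦ0, Φ]
    nlinarith [mul_le_mul_of_nonneg_left hlower (exp_pos (lam * τ)).le]
  have := hΦ.nonneg_of_eventually_le_right (Filter.mem_of_superset (Ioc_mem_nhdsGT hr) hΦpos)
  linarith

lemma IsEVISolution.sub_le_metricSlope_mul_dist_sub (hEVI : IsEVISolution φ lam u)
    (hbot : ∀ y, φ y ≠ ⊥) (hcont : ContinuousOn u (Ici 0)) (hlam : lam ≤ 0)
    (hu0 : metricSlope φ (u 0) ≠ ⊤) {y : X} (hy : φ y ≠ ⊤) :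
    (φ (u 0)).toReal - (φ y).toReal ≤
      (metricSlope φ (u 0)).toReal * dist (u 0) y - lam / 2 * dist (u 0) y ^ 2 := by
  set S := (metricSlope φ (u 0)).toReal
  have hlim : Tendsto (fun L => L * dist (u 0) y - lam / 2 * dist (u 0) y ^ 2) (𝓝[>] S)
      (𝓝 (S * dist (u 0) y - lam / 2 * dist (u 0) y ^ 2)) :=
    (((continuous_mul_const _).sub continuous_const).tendsto S).mono_left nhdsWithin_le_nhds
  exact ge_of_tendsto hlim (eventually_nhdsWithin_of_forall fun _ hL =>
    hEVI.sub_le_mul_dist_sub_of_lt hbot hcont hlam hu0 hL hy)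

lemma IsEVISolution.dist_le_add_mul_Elam (hEVI : IsEVISolution φ lam u)
    (hbot : ∀ y, φ y ≠ ⊥) (hcont : ContinuousOn u (Ici 0)) (hlam : lam ≤ 0)
    (hu0 : metricSlope φ (u 0) ≠ ⊤) {ε α b : ℝ} (hε : 0 < ε) (hα : 0 < α) (hαb : α ≤ b)
    (hαε : dist (u α) (u 0) < ε) :
    dist (u b) (u 0) ≤ ε * exp (-lam * b) + ((metricSlope φ (u 0)).toReal + ε) * Elam (-lam) b := by
  set S := (metricSlope φ (u 0)).toReal with hSdef
  -- the slope bound makes `d(u t, u 0)` a subsolution of `ρ' = S - lam * ρ`; `ρ` is a strict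
  -- supersolution starting above it
  set ρ : ℝ → ℝ := fun t => ε * exp (-lam * t) + (S + ε) * Elam (-lam) t
  have hρ : ∀ t, 0 ≤ t → ε ≤ ρ t := fun t ht => by
    have h1 : 1 ≤ exp (-lam * t) := one_le_exp (mul_nonneg (neg_nonneg.2 hlam) ht)
    have hS : 0 ≤ S := EReal.toReal_nonneg metricSlope_nonneg
    nlinarith [Elam_nonneg (-lam) ht]
  have hρ' : ∀ t, HasDerivAt ρ (S + ε + -lam * ρ t) t := fun t =>
    ((((hasDerivAt_id' t).const_mul (-lam)).exp.const_mul ε).add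
      ((hasDerivAt_Elam (-lam) t).const_mul (S + ε))).congr_deriv
      (by simp only [ρ]; linear_combination -(S + ε) * mul_Elam (-lam) t)
  have hsq : dist (u b) (u 0) ^ 2 ≤ ρ b ^ 2 := by
    refine hEVI.dist_sq_le_of_comparison hbot (ne_top_of_metricSlope_ne_top hu0) hα hαb
      (B := fun t => ρ t ^ 2) (B' := fun t => 2 * ρ t * (S + ε + -lam * ρ t))
      (fun t => ((hρ' t).pow 2).congr_deriv (by ring)) ?_ fun x hx hxρ => ?_
    · exact pow_le_pow_left₀ dist_nonneg (hαε.le.trans (hρ α hα.le)) 2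
    · have hρx : 0 < ρ x := hε.trans_le (hρ x (hα.le.trans hx.1))
      have hdx : dist (u 0) (u x) = ρ x := by
        rw [dist_comm]
        exact (pow_left_inj₀ dist_nonneg hρx.le two_ne_zero).1 hxρ
      have hslope := hEVI.sub_le_metricSlope_mul_dist_sub hbot hcont hlam hu0
        (hEVI.2.1 x (hα.trans_le hx.1))
      rw [hdx, ← hSdef] at hslope
      nlinarith [mul_pos hε hρx]
  exact (pow_le_pow_iff_left₀ dist_nonneg (hε.le.trans (hρ b (hα.le.trans hαb))) two_ne_zero).1 hsq

lemma IsEVISolution.dist_le_metricSlope_mul_Elam (hEVI : IsEVISolution φ lam u)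
    (hbot : ∀ y, φ y ≠ ⊥) (hcont : ContinuousOn u (Ici 0)) (hlam : lam ≤ 0)
    (hu0 : metricSlope φ (u 0) ≠ ⊤) {b : ℝ} (hb : 0 < b) :
    dist (u b) (u 0) ≤ (metricSlope φ (u 0)).toReal * Elam (-lam) b := by
  set S := (metricSlope φ (u 0)).toReal
  have hu : Tendsto (fun t => dist (u t) (u 0)) (𝓝[>] 0) (𝓝 0) := by
    simpa using (((hcont 0 (mem_Ici.2 le_rfl)).mono Ioi_subset_Ici_self).tendsto).dist
      (tendsto_const_nhds (x := u 0))
  have hε : ∀ ε > 0, dist (u b) (u 0) ≤ ε * exp (-lam * b) + (S + ε) * Elam (-lam) b := by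
    intro ε hε
    obtain ⟨α, hαε, hαb⟩ := ((hu.eventually_lt_const hε).and (Ioo_mem_nhdsGT hb)).exists
    exact hEVI.dist_le_add_mul_Elam hbot hcont hlam hu0 hε hαb.1 hαb.2.le hαε
  have hlim : Tendsto (fun ε => ε * exp (-lam * b) + (S + ε) * Elam (-lam) b) (𝓝[>] 0)
      (𝓝 (S * Elam (-lam) b)) := by
    have h : Continuous fun ε => ε * exp (-lam * b) + (S + ε) * Elam (-lam) b := by fun_prop
    simpa using (h.tendsto 0).mono_left nhdsWithin_le_nhds
  exact ge_of_tendsto hlim (eventually_nhdsWithin_of_forall hε)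

lemma IsEVISolution.sub_le_metricSlope_sq_mul (hEVI : IsEVISolution φ lam u)
    (hbot : ∀ y, φ y ≠ ⊥) (hcont : ContinuousOn u (Ici 0)) (hlam : lam ≤ 0)
    (hu0 : metricSlope φ (u 0) ≠ ⊤) {r : ℝ} (hr : 0 < r) :
    (φ (u 0)).toReal - (φ (u r)).toReal ≤
      (metricSlope φ (u 0)).toReal ^ 2 * r * exp (-(2 * lam * r)) := by
  set S := (metricSlope φ (u 0)).toReal
  have hS : 0 ≤ S := EReal.toReal_nonneg metricSlope_nonneg
  have hslope := hEVI.sub_le_metricSlope_mul_dist_sub hbot hcont hlam hu0 (hEVI.2.1 r hr)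
  have hspeed := hEVI.dist_le_metricSlope_mul_Elam hbot hcont hlam hu0 hr
  rw [dist_comm] at hspeed
  set D := dist (u 0) (u r)
  set E := Elam (-lam) r
  have hE : E + -lam / 2 * E ^ 2 ≤ r * exp (-(2 * lam * r)) := by
    rw [Elam_add_mul_sq, show -(2 * lam * r) = 2 * -lam * r by ring]
    exact Elam_le_mul_exp (by linarith) r
  have hD2 : D ^ 2 ≤ (S * E) ^ 2 := pow_le_pow_left₀ dist_nonneg hspeed 2
  nlinarith [mul_le_mul_of_nonneg_left hspeed hS, mul_le_mul_of_nonneg_left hE (sq_nonneg S)]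

lemma IsEVISolution.exp_mul_dist_sq_sub_dist_sq_le (hEVI : IsEVISolution φ lam u)
    (hbot : ∀ y, φ y ≠ ⊥) (hcont : ContinuousOn u (Ici 0)) (hlam : lam ≤ 0)
    (hu0 : metricSlope φ (u 0) ≠ ⊤) {v : X} (hv : φ v ≠ ⊤) {t : ℝ} (ht : 0 ≤ t) :
    exp (2 * lam * t) / 2 * dist (u t) v ^ 2 - 1 / 2 * dist (u 0) v ^ 2 ≤
      Elam (2 * lam) t * ((φ v).toReal - (φ (u 0)).toReal) +
        t ^ 2 / 2 * (metricSlope φ (u 0)).toReal ^ 2 := by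
  set S := (metricSlope φ (u 0)).toReal with hS
  set c := (φ v).toReal - (φ (u 0)).toReal with hc
  have h := hEVI.exp_mul_dist_sq_le hbot hcont (ν := 2 * lam) (by linarith) hv le_rfl ht
    (H := fun s => Elam (2 * lam) s * c + S ^ 2 * s ^ 2 / 2)
    (H' := fun s => exp (2 * lam * s) * c + S ^ 2 * s)
    (fun s => (((hasDerivAt_Elam (2 * lam) s).mul_const c).add
      (((hasDerivAt_pow 2 s).const_mul (S ^ 2)).div_const 2)).congr_deriv (by ring))
    fun s hs => by
      have hdrop := hEVI.sub_le_metricSlope_sq_mul hbot hcont hlam hu0 hs.1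
      rw [← hS] at hdrop
      have hprod : exp (2 * lam * s) * exp (-(2 * lam * s)) = 1 := by rw [← exp_add]; simp
      calc exp (2 * lam * s) * ((φ v).toReal - (φ (u s)).toReal)
          ≤ exp (2 * lam * s) * (c + S ^ 2 * s * exp (-(2 * lam * s))) :=
            mul_le_mul_of_nonneg_left (by linarith) (exp_pos _).le
        _ = exp (2 * lam * s) * c + S ^ 2 * s := by linear_combination S ^ 2 * s * hprod
  simp only [mul_zero, exp_zero, one_mul, Elam_zero, zero_mul] at h
  linarith

end EVI

theorem stmt12_general {X : Type*} [MetricSpace X] (φ : X → EReal) (lam : ℝ) (hlam : lam ≤ 0)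
    (hbot : ∀ y, φ y ≠ ⊥)
    (u : ℝ → X) (hcont : ContinuousOn u (Set.Ici 0)) (hEVI : IsEVISolution φ lam u)
    (hu0 : metricSlope φ (u 0) ≠ ⊤) :
    ∀ v : X, φ v ≠ ⊤ → ∀ t : ℝ, 0 ≤ t →
      ((Real.exp (2 * lam * t) / 2 * dist (u t) v ^ 2
          - 1 / 2 * dist (u 0) v ^ 2 : ℝ) : EReal) ≤
        ((Elam (2 * lam) t : ℝ) : EReal) * (φ v - φ (u 0)) +
          ((t ^ 2 / 2 : ℝ) : EReal) * (metricSlope φ (u 0)) ^ 2 := by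
  intro v hv t ht
  rw [← EReal.coe_toReal hv (hbot v),
    ← EReal.coe_toReal (ne_top_of_metricSlope_ne_top hu0) (hbot (u 0)),
    ← coe_toReal_metricSlope hu0, ← EReal.coe_sub, ← EReal.coe_pow, ← EReal.coe_mul,
    ← EReal.coe_mul, ← EReal.coe_add, EReal.coe_le_coe_iff]
  exact hEVI.exp_mul_dist_sq_sub_dist_sq_le hbot hcont hlam hu0 hv ht

theorem stmt12 {X : Type*} [MetricSpace X] (φ : X → EReal) (lam : ℝ) (hlam : lam ≤ 0)
    (hbot : ∀ y, φ y ≠ ⊥) (hproper : ∃ y, φ y ≠ ⊤) (hlsc : LowerSemicontinuous φ)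
    (u : ℝ → X) (hcont : ContinuousOn u (Set.Ici 0)) (hEVI : IsEVISolution φ lam u)
    (hu0 : metricSlope φ (u 0) ≠ ⊤) :
    ∀ v : X, φ v ≠ ⊤ → ∀ t : ℝ, 0 ≤ t →
      ((Real.exp (2 * lam * t) / 2 * dist (u t) v ^ 2
          - 1 / 2 * dist (u 0) v ^ 2 : ℝ) : EReal) ≤
        ((Elam (2 * lam) t : ℝ) : EReal) * (φ v - φ (u 0)) +
          ((t ^ 2 / 2 : ℝ) : EReal) * (metricSlope φ (u 0)) ^ 2 :=
  stmt12_general φ lam hlam hbot u hcont hEVI hu0
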